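/- For the parent timed Büchi automaton P of the matrix-multiplication parallel timing system and the path ρ₂ = ⟨s₆, s₇, s₈, s₉, s₁₀, s₁₁, s₁₂, s₀⟩, the maximum delay Δ_P(ρ₂) equals 7.3 (milliseconds): every subword over ρ₂ has duration strictly less than 7.3, and for every ε > 0 there is a subword over ρ₂ of duration greater than 7.3 − ε. -/

import Mathlib

/-- A transition of a timed automaton: source state, alphabet symbol, destination state,
the list of timers reset (to 0) when the transition is taken, and the conjunction of
constraints `x < c` (represented as pairs `(x, c)`) that must hold for the transition
to be taken. -/
structure TTrans (A Q K : Type) where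
  src : Q
  sym : A
  dst : Q
  resets : List K
  constraints : List (K × ℝ)

/-- One step of a timed automaton with transition list `trs`, from state `q` to state `q'`,
reading symbol `a` at time `t`.  A timer valuation `v` records, for each timer, the timestamp
at which it was last reset (so the current value of timer `k` at time `t` is `t - v k`).
Every constraint `x < c` on the chosen transition must be satisfied, and the transition's
reset timers get reset time `t` in the new valuation `v'`. -/
def TStep {A Q K : Type} (trs : List (TTrans A Q K)) (q : Q) (v : K → ℝ)
    (a : A) (t : ℝ) (q' : Q) (v' : K → ℝ) : Prop :=
  ∃ tr ∈ trs, tr.src = q ∧ tr.sym = a ∧ tr.dst = q' ∧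
    (∀ c ∈ tr.constraints, t - v c.1 < c.2) ∧
    (∀ k, (k ∈ tr.resets → v' k = t) ∧ (k ∉ tr.resets → v' k = v k))

/-- `TRun trs q v w qs`: starting in state `q` with timer valuation `v`, the automaton can
read the finite timed word `w`, visiting exactly the sequence of states `qs`
(`qs` starts with `q` and has length `w.length + 1`). -/
inductive TRun {A Q K : Type} (trs : List (TTrans A Q K)) :
    Q → (K → ℝ) → List (A × ℝ) → List Q → Prop
  | nil (q : Q) (v : K → ℝ) : TRun trs q v [] [q]
  | cons {q : Q} {v : K → ℝ} {a : A} {t : ℝ} {q' : Q} {v' : K → ℝ}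
      {w : List (A × ℝ)} {qs : List Q} :
      TStep trs q v a t q' v' → TRun trs q' v' w qs →
      TRun trs q v ((a, t) :: w) (q :: qs)

/-- The timestamps of a timed word are strictly increasing. -/
def Increasing {A : Type} (w : List (A × ℝ)) : Prop :=
  w.Chain' fun p q => p.2 < q.2

/-- Timestamp of the first symbol of a timed word (0 for the empty word). -/
def firstTime {A : Type} (w : List (A × ℝ)) : ℝ := (w.map Prod.snd).headD 0

/-- Timestamp of the last symbol of a timed word (0 for the empty word). -/
def lastTime {A : Type} (w : List (A × ℝ)) : ℝ := (w.map Prod.snd).getLastD 0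

/-- The duration of a timed word: last timestamp minus first timestamp. -/
def duration {A : Type} (w : List (A × ℝ)) : ℝ := lastTime w - firstTime w

/-- A timed finite automaton: a start state, an accepting state and a finite
list of transitions. -/
structure TFA (A Q K : Type) where
  start : Q
  accept : Q
  trans : List (TTrans A Q K)

/-- A TFA accepts a (nonempty, strictly increasing) finite timed word if some run from the
start state — with all timers initially 0 at the time of the first transition — reads the
whole word and ends in the accepting state. -/
def TFA.Accepts {A Q K : Type} (M : TFA A Q K) (w : List (A × ℝ)) : Prop :=
  w ≠ [] ∧ Increasing w ∧
  ∃ qs : List Q, TRun M.trans M.start (fun _ => firstTime w) w qs ∧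
    qs.getLast? = some M.accept

/-- A timed Büchi automaton: a start state, a set of accepting states and a finite
list of transitions. -/
structure TBA (A Q K : Type) where
  start : Q
  accept : Set Q
  trans : List (TTrans A Q K)

/-- A TBA accepts an infinite timed word `(σ, τ)` (with strictly increasing timestamps)
if some infinite run from the start state — all timers 0 at the time `τ 0` of the first
transition — visits an accepting state infinitely often. -/
def TBA.Accepts {A Q K : Type} (M : TBA A Q K) (σ : ℕ → A) (τ : ℕ → ℝ) : Prop :=
  StrictMono τ ∧
  ∃ (ρ : ℕ → Q) (v : ℕ → K → ℝ),
    ρ 0 = M.start ∧ v 0 = (fun _ => τ 0) ∧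
    (∀ i, TStep M.trans (ρ i) (v i) (σ i) (τ i) (ρ (i + 1)) (v (i + 1))) ∧
    (∀ n, ∃ m, n ≤ m ∧ ρ m ∈ M.accept)

/-- `u` is a subword over the finite path `p` of TBA `M` if the transitions of `u` are taken
consecutively, traversing exactly the states of `p`, within some (finite prefix of a) run of
`M` from its start state, all timer constraints along the run being satisfied. -/
def TBA.SubwordOver {A Q K : Type} (M : TBA A Q K) (p : List Q) (u : List (A × ℝ)) : Prop :=
  ∃ (w₀ : List (A × ℝ)) (qs₀ : List Q),
    qs₀.length = w₀.length ∧
    Increasing (w₀ ++ u) ∧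
    TRun M.trans M.start (fun _ => firstTime (w₀ ++ u)) (w₀ ++ u) (qs₀ ++ p)

/-- The maximum delay `Δ_M(p)` along a path `p`: the supremum of the durations of all
subwords over `p`. -/
noncomputable def TBA.maxDelay {A Q K : Type} (M : TBA A Q K) (p : List Q) : ℝ :=
  sSup {d : ℝ | ∃ u, M.SubwordOver p u ∧ duration u = d}
/-- The parent TBA P of the matrix-multiplication parallel timing system: 13 states
s₀ = 0, …, s₁₂ = 12 forming a single cycle, with start state s₀ and accepting set {s₁};
transitions eᵢ : s_{i-1} → sᵢ (i = 1,…,12) and e₁₃ : s₁₂ → s₀, each carrying a distinct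
symbol (symbol `i - 1` on eᵢ); 12 timers t₁ = 0, …, t₁₂ = 11 with bounds
(c₁,…,c₁₂) = (0.2, 0.3, 0.3, 0.2, 0.3, 0.3, 0.2, 0.3, 0.3, 1, 1.5, 4) ms: eᵢ resets tᵢ
for i = 1,…,12, e₁ carries no constraint, and eᵢ carries the single constraint
`t_{i-1} < c_{i-1}` for i = 2,…,13. -/
def Pmm : TBA ℕ ℕ ℕ :=
  { start := 0, accept := {1},
    trans := [⟨0, 0, 1, [0], []⟩,
              ⟨1, 1, 2, [1], [(0, 0.2)]⟩,
              ⟨2, 2, 3, [2], [(1, 0.3)]⟩,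
              ⟨3, 3, 4, [3], [(2, 0.3)]⟩,
              ⟨4, 4, 5, [4], [(3, 0.2)]⟩,
              ⟨5, 5, 6, [5], [(4, 0.3)]⟩,
              ⟨6, 6, 7, [6], [(5, 0.3)]⟩,
              ⟨7, 7, 8, [7], [(6, 0.2)]⟩,
              ⟨8, 8, 9, [8], [(7, 0.3)]⟩,
              ⟨9, 9, 10, [9], [(8, 0.3)]⟩,
              ⟨10, 10, 11, [10], [(9, 1)]⟩,
              ⟨11, 11, 12, [11], [(10, 1.5)]⟩,
              ⟨12, 12, 0, [], [(11, 4)]⟩] }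

/-! Along ρ₂ the automaton takes e₇, …, e₁₃. Each of e₈, …, e₁₃ is guarded by the timer reset by
the transition just before it, so consecutive timestamps differ by less than c₇, …, c₁₂, whose
sum is 0.2 + 0.3 + 0.3 + 1 + 1.5 + 4 = 7.3. Taking every one of these six gaps `δ` short of its
bound gives subwords of duration 7.3 - 6δ. -/

section TimedAutomaton

variable {A Q K : Type} {trs : List (TTrans A Q K)}

theorem TRun.exists_of_append {q : Q} {v : K → ℝ} {w₀ u : List (A × ℝ)} {qs₀ p : List Q}
    (hlen : qs₀.length = w₀.length) (h : TRun trs q v (w₀ ++ u) (qs₀ ++ p)) :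
    ∃ q' v', TRun trs q' v' u p := by
  induction w₀ generalizing qs₀ q v with
  | nil =>
    rw [List.length_eq_zero_iff.mp hlen] at h
    exact ⟨q, v, h⟩
  | cons _ w₀ ih =>
    obtain _ | ⟨q₀, qs₀⟩ := qs₀
    · simp at hlen
    · obtain _ | ⟨_, h⟩ := h
      exact ih (Nat.succ.inj hlen) h

variable {q q' : Q} {v v' : K → ℝ} {a : A} {t : ℝ}

theorem TStep.sub_lt_of_guard {k : K} {c : ℝ} (h : TStep trs q v a t q' v')
    (hguard : ∀ tr ∈ trs, tr.src = q → (k, c) ∈ tr.constraints) : t - v k < c := by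
  obtain ⟨tr, htr, rfl, -, -, hcon, -⟩ := h
  exact hcon _ (hguard tr htr rfl)

theorem TStep.apply_eq_of_reset {k : K} (h : TStep trs q v a t q' v')
    (hreset : ∀ tr ∈ trs, tr.src = q → k ∈ tr.resets) : v' k = t := by
  obtain ⟨tr, htr, rfl, -, -, -, hres⟩ := h
  exact (hres k).1 (hreset tr htr rfl)

def resetAt [DecidableEq K] (v : K → ℝ) (ks : List K) (t : ℝ) : K → ℝ :=
  fun k => if k ∈ ks then t else v k

theorem TStep.of_mem [DecidableEq K] {tr : TTrans A Q K} (htr : tr ∈ trs)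
    (hguard : ∀ c ∈ tr.constraints, t - v c.1 < c.2) :
    TStep trs tr.src v tr.sym t tr.dst (resetAt v tr.resets t) :=
  ⟨tr, htr, rfl, rfl, rfl, hguard, fun _ => ⟨fun hk => if_pos hk, fun hk => if_neg hk⟩⟩

end TimedAutomaton

theorem Pmm_duration_lt_of_run_rho2 {q : ℕ} {v : ℕ → ℝ} {u : List (ℕ × ℝ)}
    (h : TRun Pmm.trans q v u [6, 7, 8, 9, 10, 11, 12, 0]) : duration u < 7.3 := by
  obtain _ | ⟨s₆, _ | ⟨s₇, _ | ⟨s₈, _ | ⟨s₉, _ | ⟨s₁₀, _ | ⟨s₁₁, _ | ⟨s₁₂, _ | ⟨_, ⟨⟩⟩⟩⟩⟩⟩⟩⟩⟩ := h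
  have r₆ := s₆.apply_eq_of_reset (k := 6) (by simp [Pmm])
  have r₇ := s₇.apply_eq_of_reset (k := 7) (by simp [Pmm])
  have r₈ := s₈.apply_eq_of_reset (k := 8) (by simp [Pmm])
  have r₉ := s₉.apply_eq_of_reset (k := 9) (by simp [Pmm])
  have r₁₀ := s₁₀.apply_eq_of_reset (k := 10) (by simp [Pmm])
  have r₁₁ := s₁₁.apply_eq_of_reset (k := 11) (by simp [Pmm])
  have g₇ := s₇.sub_lt_of_guard (k := 6) (c := 0.2) (by simp [Pmm])
  have g₈ := s₈.sub_lt_of_guard (k := 7) (c := 0.3) (by simp [Pmm])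
  have g₉ := s₉.sub_lt_of_guard (k := 8) (c := 0.3) (by simp [Pmm])
  have g₁₀ := s₁₀.sub_lt_of_guard (k := 9) (c := 1) (by simp [Pmm])
  have g₁₁ := s₁₁.sub_lt_of_guard (k := 10) (c := 1.5) (by simp [Pmm])
  have g₁₂ := s₁₂.sub_lt_of_guard (k := 11) (c := 4) (by simp [Pmm])
  simp only [duration, lastTime, firstTime, List.map_cons, List.map_nil, List.headD_cons,
    List.getLastD_cons, List.getLastD_nil]
  linarith

noncomputable def rho2Witness (δ : ℝ) : List (ℕ × ℝ) :=
  [(6, 0.6), (7, 0.8 - δ), (8, 1.1 - 2 * δ), (9, 1.4 - 3 * δ), (10, 2.4 - 4 * δ),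
    (11, 3.9 - 5 * δ), (12, 7.9 - 6 * δ)]

theorem duration_rho2Witness (δ : ℝ) : duration (rho2Witness δ) = 7.3 - 6 * δ := by
  simp only [rho2Witness, duration, lastTime, firstTime, List.map_cons, List.map_nil,
    List.headD_cons, List.getLastD_cons, List.getLastD_nil]
  ring

theorem Pmm_subwordOver_rho2Witness {δ : ℝ} (hδ₀ : 0 < δ) (hδ : δ < 0.2) :
    Pmm.SubwordOver [6, 7, 8, 9, 10, 11, 12, 0] (rho2Witness δ) := by
  refine ⟨[(0, 0), (1, 0.1), (2, 0.2), (3, 0.3), (4, 0.4), (5, 0.5)], [0, 1, 2, 3, 4, 5], rfl,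
    ?_, ?_⟩
  · show List.IsChain _ _
    simp only [rho2Witness, List.cons_append, List.nil_append,
      List.isChain_cons_cons, List.isChain_singleton, and_true]
    norm_num
    refine ⟨?_, ?_, ?_, ?_, ?_, ?_⟩ <;> linarith
  · simp only [rho2Witness, firstTime, List.cons_append, List.nil_append, List.map_cons,
      List.headD_cons]
    refine .cons (.of_mem (tr := ⟨0, 0, 1, [0], []⟩) (by simp [Pmm]) ?_) <|
      .cons (.of_mem (tr := ⟨1, 1, 2, [1], [(0, 0.2)]⟩) (by simp [Pmm]) ?_) <|
      .cons (.of_mem (tr := ⟨2, 2, 3, [2], [(1, 0.3)]⟩) (by simp [Pmm]) ?_) <|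
      .cons (.of_mem (tr := ⟨3, 3, 4, [3], [(2, 0.3)]⟩) (by simp [Pmm]) ?_) <|
      .cons (.of_mem (tr := ⟨4, 4, 5, [4], [(3, 0.2)]⟩) (by simp [Pmm]) ?_) <|
      .cons (.of_mem (tr := ⟨5, 5, 6, [5], [(4, 0.3)]⟩) (by simp [Pmm]) ?_) <|
      .cons (.of_mem (tr := ⟨6, 6, 7, [6], [(5, 0.3)]⟩) (by simp [Pmm]) ?_) <|
      .cons (.of_mem (tr := ⟨7, 7, 8, [7], [(6, 0.2)]⟩) (by simp [Pmm]) ?_) <|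
      .cons (.of_mem (tr := ⟨8, 8, 9, [8], [(7, 0.3)]⟩) (by simp [Pmm]) ?_) <|
      .cons (.of_mem (tr := ⟨9, 9, 10, [9], [(8, 0.3)]⟩) (by simp [Pmm]) ?_) <|
      .cons (.of_mem (tr := ⟨10, 10, 11, [10], [(9, 1)]⟩) (by simp [Pmm]) ?_) <|
      .cons (.of_mem (tr := ⟨11, 11, 12, [11], [(10, 1.5)]⟩) (by simp [Pmm]) ?_) <|
      .cons (.of_mem (tr := ⟨12, 12, 0, [], [(11, 4)]⟩) (by simp [Pmm]) ?_) <| .nil _ _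
    all_goals norm_num [resetAt]
    all_goals linarith

/-- For the path ρ₂ = ⟨s₆, s₇, …, s₁₂, s₀⟩, the maximum delay Δ_P(ρ₂) equals 7.3 ms:
every subword over ρ₂ has duration < 7.3, and for every ε > 0 some subword over ρ₂ has
duration > 7.3 - ε. -/
theorem Pmm_maxDelay_rho2 :
    (∀ u, Pmm.SubwordOver [6, 7, 8, 9, 10, 11, 12, 0] u → duration u < 7.3) ∧
    (∀ ε : ℝ, 0 < ε → ∃ u, Pmm.SubwordOver [6, 7, 8, 9, 10, 11, 12, 0] u ∧
      7.3 - ε < duration u) := by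
  refine ⟨fun u ⟨w₀, qs₀, hlen, _, hrun⟩ => ?_, fun ε hε => ?_⟩
  · obtain ⟨_, _, hu⟩ := TRun.exists_of_append hlen hrun
    exact Pmm_duration_lt_of_run_rho2 hu
  · set δ := min (ε / 12) 0.1
    have hδ₀ : 0 < δ := lt_min (by positivity) (by norm_num)
    have hδε : δ ≤ ε / 12 := min_le_left _ _
    have hδ : δ < 0.2 := (min_le_right _ _).trans_lt (by norm_num)
    refine ⟨rho2Witness δ, Pmm_subwordOver_rho2Witness hδ₀ hδ, ?_⟩
    rw [duration_rho2Witness]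
    linarith
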